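/- Let n ≥ 2, S ⊆ ℤ^n, and g : ℤ^k → ℤ an operation. Consider the properties: (i) S is closed under some majority operation and under g; (ii) S is closed under some majority operation, and for each 1 ≤ i < j ≤ n, π_{i,j}(S) is g-closed; (iii) S = ⋈_{1≤i<j≤n} π_{i,j}(S), and for each 1 ≤ i < j ≤ n, π_{i,j}(S) is g-closed; (iv) S = ⋈_{1≤i<j≤n} cl_g(π_{i,j}(S)). Then (i) ⇔ (ii), (ii) ⇒ (iii), and (iii) ⇔ (iv). -/

import Mathlib

/-- Componentwise closedness of a set of `ι`-indexed integer vectors under a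
`k`-ary operation `f : ℤ^k → ℤ`. -/
def CptClosed {k : ℕ} {ι : Type*} (f : (Fin k → ℤ) → ℤ) (S : Set (ι → ℤ)) : Prop :=
  ∀ x : Fin k → ι → ℤ, (∀ l, x l ∈ S) → (fun i => f (fun l => x l i)) ∈ S

/-- `f : ℤ³ → ℤ` is a majority operation. -/
def IsMajorityOp (f : (Fin 3 → ℤ) → ℤ) : Prop :=
  ∀ a b : ℤ, f ![a, a, b] = a ∧ f ![a, b, a] = a ∧ f ![b, a, a] = a

/-- `S` is closed under some majority operation. -/
def MajClosed {ι : Type*} (S : Set (ι → ℤ)) : Prop :=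
  ∃ f : (Fin 3 → ℤ) → ℤ, IsMajorityOp f ∧ CptClosed f S

/-- The projection `π_{i,j}(x) = (x_i, x_j)`. -/
def proj2 {n : ℕ} (i j : Fin n) (x : Fin n → ℤ) : Fin 2 → ℤ := ![x i, x j]

/-- The projection `π_{i,j}(S)`. -/
def projSet {n : ℕ} (i j : Fin n) (S : Set (Fin n → ℤ)) : Set (Fin 2 → ℤ) :=
  proj2 i j '' S

/-- The join `⋈_{1 ≤ i < j ≤ n} F i j`. -/
def joinPairs {n : ℕ} (F : Fin n → Fin n → Set (Fin 2 → ℤ)) : Set (Fin n → ℤ) :=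
  {x | ∀ i j : Fin n, i < j → proj2 i j x ∈ F i j}

/-- The `f`-closure of `S`: the intersection of all `f`-closed supersets of `S`. -/
def clOp {k m : ℕ} (f : (Fin k → ℤ) → ℤ) (S : Set (Fin m → ℤ)) : Set (Fin m → ℤ) :=
  ⋂₀ {T | S ⊆ T ∧ CptClosed f T}

/-- The directed discrete midpoint operation `μ`. -/
def muOp : (Fin 2 → ℤ) → ℤ := fun t =>
  if t 1 ≤ t 0 then ⌈((t 0 + t 1 : ℤ) : ℚ) / 2⌉ else ⌊((t 0 + t 1 : ℤ) : ℚ) / 2⌋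

/-- The operation `g(x,y) = ⌈(x+y)/2⌉`. -/
def ceilAvgOp : (Fin 2 → ℤ) → ℤ := fun t => ⌈((t 0 + t 1 : ℤ) : ℚ) / 2⌉

/-- The operation `h(x,y) = ⌊(x+y)/2⌋`. -/
def floorAvgOp : (Fin 2 → ℤ) → ℤ := fun t => ⌊((t 0 + t 1 : ℤ) : ℚ) / 2⌋

/-- The median operation on three integers. -/
def medianOp : (Fin 3 → ℤ) → ℤ := fun t =>
  max (max (min (t 0) (t 1)) (min (t 1) (t 2))) (min (t 0) (t 2))

/-- The canonical embedding `ℤ^m → ℝ^m`. -/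
def toR {m : ℕ} (z : Fin m → ℤ) : Fin m → ℝ := fun l => (z l : ℝ)

/-- The integer neighborhood `N(x)` of a real vector `x`. -/
def intNbhd {m : ℕ} (x : Fin m → ℝ) : Set (Fin m → ℤ) :=
  {z | ∀ j, |(z j : ℝ) - x j| < 1}

/-- `S` is midpoint-neighbor-closed: for all `x, y ∈ S`, `N((x+y)/2) ⊆ S`. -/
def MidpointNeighborClosed {m : ℕ} (S : Set (Fin m → ℤ)) : Prop :=
  ∀ x ∈ S, ∀ y ∈ S, ∀ z : Fin m → ℤ,
    (∀ j, |(z j : ℝ) - ((x j : ℝ) + (y j : ℝ)) / 2| < 1) → z ∈ S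

/-- `S ⊆ ℤ^m` is integrally convex. -/
def IntegrallyConvex {m : ℕ} (S : Set (Fin m → ℤ)) : Prop :=
  ∀ x : Fin m → ℝ, x ∈ convexHull ℝ (toR '' S) →
    x ∈ convexHull ℝ (toR '' (S ∩ intNbhd x))

/-- The closed convex closure of `T ⊆ ℤ^m` inside `ℝ^m`: the intersection of all
topologically closed convex sets containing `T`. -/
def closedConvexClosure {m : ℕ} (T : Set (Fin m → ℤ)) : Set (Fin m → ℝ) :=
  ⋂₀ {C : Set (Fin m → ℝ) | Convex ℝ C ∧ IsClosed C ∧ toR '' T ⊆ C}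

/-- `S = cl_conv̄(S) ∩ ℤ^m`. -/
def ClosedConvexIntegral {m : ℕ} (S : Set (Fin m → ℤ)) : Prop :=
  S = {z : Fin m → ℤ | toR z ∈ closedConvexClosure S}

/-- All entries of `A` lie in `{0, -1, +1}`. -/
def UnitMatrix {mR n : ℕ} (A : Matrix (Fin mR) (Fin n) ℤ) : Prop :=
  ∀ i j, A i j = 0 ∨ A i j = -1 ∨ A i j = 1

/-- Each row of `A` has at most `c` nonzero entries. -/
def RowSupportLE {mR n : ℕ} (A : Matrix (Fin mR) (Fin n) ℤ) (c : ℕ) : Prop :=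
  ∀ i, {j | A i j ≠ 0}.ncard ≤ c

/-- `S` is representable by a UTVPI system. -/
def RepUTVPI {n : ℕ} (S : Set (Fin n → ℤ)) : Prop :=
  ∃ (mR : ℕ) (A : Matrix (Fin mR) (Fin n) ℤ) (b : Fin mR → ℝ),
    UnitMatrix A ∧ RowSupportLE A 2 ∧
    S = {x | ∀ i, b i ≤ ((∑ j, A i j * x j : ℤ) : ℝ)}

/-- `S` is representable by an SVPI system. -/
def RepSVPI {n : ℕ} (S : Set (Fin n → ℤ)) : Prop :=
  ∃ (mR : ℕ) (A : Matrix (Fin mR) (Fin n) ℤ) (b : Fin mR → ℝ),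
    UnitMatrix A ∧ RowSupportLE A 1 ∧
    S = {x | ∀ i, b i ≤ ((∑ j, A i j * x j : ℤ) : ℝ)}

/-- `S` is representable by a DC system. -/
def RepDC {n : ℕ} (S : Set (Fin n → ℤ)) : Prop :=
  ∃ (mR : ℕ) (A : Matrix (Fin mR) (Fin n) ℤ) (b : Fin mR → ℝ),
    UnitMatrix A ∧
    (∀ i, {j | A i j = 1}.ncard ≤ 1) ∧ (∀ i, {j | A i j = -1}.ncard ≤ 1) ∧
    S = {x | ∀ i, b i ≤ ((∑ j, A i j * x j : ℤ) : ℝ)}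

/-- `S` is representable by a TVPI system with possibly infinitely many inequalities. -/
def RepTVPIInf {n : ℕ} (S : Set (Fin n → ℤ)) : Prop :=
  ∃ (I : Type) (a1 a2 b : I → ℝ) (p q : I → Fin n),
    S = {x | ∀ i : I, b i ≤ a1 i * (x (p i) : ℝ) + a2 i * (x (q i) : ℝ)}

/-- `S` is 2-decomposable: `S = ⋈_{i<j} π_{i,j}(S)`. -/
def TwoDecomposable {ι : Type*} [LinearOrder ι] (S : Set (ι → ℤ)) : Prop :=
  S = {x | ∀ i j : ι, i < j → ∃ s ∈ S, s i = x i ∧ s j = x j}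

/-!
The heart of the matter is the Baker–Pixley theorem: a set closed under a majority operation
is the join of its two-dimensional projections. Indeed, if `x` agrees with members of `S` on
every pair of coordinates, one shows by induction on `|F|` that `x` agrees with a member of `S`
on every set `F` of at least two coordinates: for three distinct `a, b, c ∈ F`, applying the
majority operation to members agreeing with `x` on `F \ {a}`, `F \ {b}`, `F \ {c}` yields one
agreeing with `x` on all of `F`, since every coordinate is missed by at most one of them.
Everything else follows from two observations: projections of `g`-closed sets are `g`-closed,
and a join of `g`-closed relations is `g`-closed.
-/

lemma mem_projSet {n : ℕ} {i j : Fin n} {S : Set (Fin n → ℤ)} {p : Fin 2 → ℤ} :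
    p ∈ projSet i j S ↔ ∃ s ∈ S, s i = p 0 ∧ s j = p 1 := by
  constructor
  · rintro ⟨s, hs, rfl⟩
    exact ⟨s, hs, rfl, rfl⟩
  · rintro ⟨s, hs, h0, h1⟩
    refine ⟨s, hs, funext fun u => ?_⟩
    fin_cases u
    exacts [h0, h1]

lemma proj2_op {n k : ℕ} (g : (Fin k → ℤ) → ℤ) (i j : Fin n) (x : Fin k → Fin n → ℤ) :
    proj2 i j (fun t => g (fun l => x l t)) = fun u => g (fun l => proj2 i j (x l) u) := by
  funext u
  fin_cases u <;> rfl

section ClosureOperator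

variable {k m : ℕ} {f : (Fin k → ℤ) → ℤ} {S T : Set (Fin m → ℤ)}

lemma subset_clOp : S ⊆ clOp f S :=
  fun _ hx => Set.mem_sInter.mpr fun _ hT => hT.1 hx

lemma cptClosed_clOp : CptClosed f (clOp f S) :=
  fun x hx => Set.mem_sInter.mpr fun T hT => hT.2 x fun l => Set.mem_sInter.mp (hx l) T hT

lemma clOp_subset (hST : S ⊆ T) (hT : CptClosed f T) : clOp f S ⊆ T :=
  fun _ hx => Set.mem_sInter.mp hx T ⟨hST, hT⟩

lemma clOp_eq_self (hS : CptClosed f S) : clOp f S = S :=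
  (clOp_subset subset_rfl hS).antisymm subset_clOp

end ClosureOperator

lemma CptClosed.projSet {n k : ℕ} {g : (Fin k → ℤ) → ℤ} {S : Set (Fin n → ℤ)}
    (hS : CptClosed g S) (i j : Fin n) : CptClosed g (projSet i j S) := by
  intro p hp
  choose s hsS hs using hp
  refine ⟨fun t => g (fun l => s l t), hS s hsS, ?_⟩
  simp only [proj2_op, hs]

lemma cptClosed_joinPairs {n k : ℕ} {g : (Fin k → ℤ) → ℤ} {F : Fin n → Fin n → Set (Fin 2 → ℤ)}
    (hF : ∀ i j, i < j → CptClosed g (F i j)) : CptClosed g (joinPairs F) := by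
  intro x hx i j hij
  rw [proj2_op]
  exact hF i j hij _ fun l => hx l i j hij

lemma joinPairs_congr {n : ℕ} {F G : Fin n → Fin n → Set (Fin 2 → ℤ)}
    (h : ∀ i j, i < j → F i j = G i j) : joinPairs F = joinPairs G := by
  ext x
  exact forall₂_congr fun i j => forall_congr' fun hij => by rw [h i j hij]

lemma IsMajorityOp.apply_eq {f : (Fin 3 → ℤ) → ℤ} (hf : IsMajorityOp f) {a u v w : ℤ}
    (h : u = a ∧ v = a ∨ u = a ∧ w = a ∨ v = a ∧ w = a) : f ![u, v, w] = a := by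
  rcases h with ⟨hu, hv⟩ | ⟨hu, hw⟩ | ⟨hv, hw⟩
  · rw [hu, hv]; exact (hf a w).1
  · rw [hu, hw]; exact (hf a v).2.1
  · rw [hv, hw]; exact (hf a u).2.2

namespace MajClosed

variable {ι : Type*} {S : Set (ι → ℤ)}

lemma exists_eqOn_of_erase [DecidableEq ι] (hS : MajClosed S) {x : ι → ℤ} {F : Finset ι}
    {a b c : ι} (hab : a ≠ b) (hac : a ≠ c) (hbc : b ≠ c)
    (ha : ∃ s ∈ S, ∀ i ∈ F.erase a, s i = x i) (hb : ∃ s ∈ S, ∀ i ∈ F.erase b, s i = x i)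
    (hc : ∃ s ∈ S, ∀ i ∈ F.erase c, s i = x i) : ∃ s ∈ S, ∀ i ∈ F, s i = x i := by
  obtain ⟨f, hf, hfS⟩ := hS
  obtain ⟨s₁, hs₁S, hs₁⟩ := ha
  obtain ⟨s₂, hs₂S, hs₂⟩ := hb
  obtain ⟨s₃, hs₃S, hs₃⟩ := hc
  refine ⟨_, hfS ![s₁, s₂, s₃] (by simp [Fin.forall_fin_succ, hs₁S, hs₂S, hs₃S]), fun i hi => ?_⟩
  have hvec : (fun l => (![s₁, s₂, s₃] : Fin 3 → ι → ℤ) l i) = ![s₁ i, s₂ i, s₃ i] := by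
    funext l
    fin_cases l <;> rfl
  simp only [hvec]
  apply hf.apply_eq
  by_cases hia : i = a
  · subst hia
    exact .inr <| .inr ⟨hs₂ i (Finset.mem_erase.mpr ⟨hab, hi⟩),
      hs₃ i (Finset.mem_erase.mpr ⟨hac, hi⟩)⟩
  by_cases hib : i = b
  · subst hib
    exact .inr <| .inl ⟨hs₁ i (Finset.mem_erase.mpr ⟨hia, hi⟩),
      hs₃ i (Finset.mem_erase.mpr ⟨hbc, hi⟩)⟩
  · exact .inl ⟨hs₁ i (Finset.mem_erase.mpr ⟨hia, hi⟩), hs₂ i (Finset.mem_erase.mpr ⟨hib, hi⟩)⟩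

lemma exists_eqOn_of_forall_pair (hS : MajClosed S) {x : ι → ℤ}
    (hx : ∀ i j, i ≠ j → ∃ s ∈ S, s i = x i ∧ s j = x j) (F : Finset ι) (hF : 2 ≤ F.card) :
    ∃ s ∈ S, ∀ i ∈ F, s i = x i := by
  classical
  generalize hm : F.card = m at hF
  induction m, hF using Nat.le_induction generalizing F with
  | base =>
    obtain ⟨a, b, hab, rfl⟩ := Finset.card_eq_two.mp hm
    obtain ⟨s, hs, ha, hb⟩ := hx a b hab
    exact ⟨s, hs, by simp [ha, hb]⟩
  | succ m hm2 ih =>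
    obtain ⟨a, haF, b, hbF, c, hcF, hab, hac, hbc⟩ := (Finset.two_lt_card (s := F)).mp (by omega)
    have erase_card {d : ι} (hd : d ∈ F) : (F.erase d).card = m := by
      rw [Finset.card_erase_of_mem hd]
      omega
    exact hS.exists_eqOn_of_erase hab hac hbc (ih _ (erase_card haF))
      (ih _ (erase_card hbF)) (ih _ (erase_card hcF))

lemma mem_of_forall_pair [Fintype ι] (hι : 2 ≤ Fintype.card ι) (hS : MajClosed S)
    {x : ι → ℤ} (hx : ∀ i j, i ≠ j → ∃ s ∈ S, s i = x i ∧ s j = x j) : x ∈ S := by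
  obtain ⟨s, hs, hsx⟩ := hS.exists_eqOn_of_forall_pair hx Finset.univ hι
  rwa [← funext fun i => hsx i (Finset.mem_univ i)]

lemma eq_joinPairs {n : ℕ} (hn : 2 ≤ n) {S : Set (Fin n → ℤ)} (hS : MajClosed S) :
    S = joinPairs (fun i j => projSet i j S) := by
  refine subset_antisymm (fun x hx i j _ => ⟨x, hx, rfl⟩) fun x hx => ?_
  refine hS.mem_of_forall_pair (by simpa using hn) fun i j hij => ?_
  rcases hij.lt_or_gt with h | h
  · exact mem_projSet.mp (hx i j h)
  · obtain ⟨s, hs, hj, hi⟩ := mem_projSet.mp (hx j i h)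
    exact ⟨s, hs, hi, hj⟩

end MajClosed

theorem stmt_2_general {n k : ℕ} (hn : 2 ≤ n) (S : Set (Fin n → ℤ))
    (g : (Fin k → ℤ) → ℤ) :
    ((MajClosed S ∧ CptClosed g S) ↔
      (MajClosed S ∧ ∀ i j : Fin n, i < j → CptClosed g (projSet i j S))) ∧
    ((MajClosed S ∧ ∀ i j : Fin n, i < j → CptClosed g (projSet i j S)) →
      (S = joinPairs (fun i j => projSet i j S) ∧
        ∀ i j : Fin n, i < j → CptClosed g (projSet i j S))) ∧
    ((S = joinPairs (fun i j => projSet i j S) ∧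
        ∀ i j : Fin n, i < j → CptClosed g (projSet i j S)) ↔
      S = joinPairs (fun i j => clOp g (projSet i j S))) := by
  have hjoin : MajClosed S → S = joinPairs (fun i j => projSet i j S) := MajClosed.eq_joinPairs hn
  have hcl : (∀ i j : Fin n, i < j → CptClosed g (projSet i j S)) →
      joinPairs (fun i j => clOp g (projSet i j S)) = joinPairs (fun i j => projSet i j S) :=
    fun hp => joinPairs_congr fun i j hij => clOp_eq_self (hp i j hij)
  refine ⟨⟨fun ⟨hm, hg⟩ => ⟨hm, fun i j _ => hg.projSet i j⟩, fun ⟨hm, hp⟩ => ?_⟩,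
    fun ⟨hm, hp⟩ => ⟨hjoin hm, hp⟩, ⟨fun ⟨h, hp⟩ => h.trans (hcl hp).symm, fun h => ?_⟩⟩
  · refine ⟨hm, ?_⟩
    rw [hjoin hm]
    exact cptClosed_joinPairs hp
  · have hS : CptClosed g S := h ▸ cptClosed_joinPairs fun _ _ _ => cptClosed_clOp
    have hp : ∀ i j : Fin n, i < j → CptClosed g (projSet i j S) := fun i j _ => hS.projSet i j
    exact ⟨h.trans (hcl hp), hp⟩

/-- 2-decomposability and closure property induced by an operation `g`:
(i) ⇔ (ii), (ii) ⇒ (iii), (iii) ⇔ (iv). -/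
theorem stmt_2 {n k : ℕ} (hn : 2 ≤ n) (hk : 1 ≤ k) (S : Set (Fin n → ℤ))
    (g : (Fin k → ℤ) → ℤ) :
    ((MajClosed S ∧ CptClosed g S) ↔
      (MajClosed S ∧ ∀ i j : Fin n, i < j → CptClosed g (projSet i j S))) ∧
    ((MajClosed S ∧ ∀ i j : Fin n, i < j → CptClosed g (projSet i j S)) →
      (S = joinPairs (fun i j => projSet i j S) ∧
        ∀ i j : Fin n, i < j → CptClosed g (projSet i j S))) ∧
    ((S = joinPairs (fun i j => projSet i j S) ∧
        ∀ i j : Fin n, i < j → CptClosed g (projSet i j S)) ↔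
      S = joinPairs (fun i j => clOp g (projSet i j S))) :=
  stmt_2_general hn S g
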